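/- arXiv:math/0212244 — 2 statements merged into one kernel-verified Lean document; each statement's English description precedes it below -/
import Mathlib

section
/- Let T₁ and T₂ be trees on the vertex set Fin (n+1), and associate to each tree the family of vectors in EuclideanSpace ℝ (Fin (n+1)) consisting of one vector e_i − e_j for each edge {i, j} (where e_0, …, e_n is the standard orthonormal basis). Then the following are equivalent: (1) T₁ and T₂ are isomorphic as graphs; (2) there exist a linear isometry T of EuclideanSpace ℝ (Fin (n+1)), a bijection φ from the edge set of T₁ to the edge set of T₂, and signs ε_e ∈ {−1, 1} such that the vector associated to φ(e) equals ε_e · T(vector associated to e) for every edge e of T₁. (The families of simplices generating A_n are in one-to-one correspondence with the trees with n+1 vertices.) -/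
/-!
Two roots `eᵢ - eⱼ` and `eₖ - eₗ` are orthogonal exactly when the edges `{i, j}` and `{k, l}` are
disjoint, and a linear isometry together with signs preserves orthogonality. So the edge bijection
of the root families is an isomorphism of line graphs, and the theorem reduces to Whitney's theorem
for trees. For trees with at least three vertices, the images of two edges at a vertex `v` meet in
a vertex `w`, and since a tree has no triangle, three pairwise meeting edges share a vertex; hence
the edges at `v` go exactly to the edges at `w`. A leaf is sent to the far end of the image of its
edge, and `v ↦ w` is the required isomorphism. Trees on at most two vertices are complete graphs.
-/

open SimpleGraph
open scoped InnerProductSpace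

namespace EuclideanSpace

variable {ι : Type*} [DecidableEq ι]

lemma inner_single_sub_single_ne_zero_iff {𝕜 : Type*} [RCLike 𝕜] [Fintype ι] {i j k l : ι}
    (hij : i ≠ j) (hkl : k ≠ l) :
    ⟪single i (1 : 𝕜) - single j 1, single k (1 : 𝕜) - single l 1⟫_𝕜 ≠ 0 ↔
      ∃ v, v ∈ s(i, j) ∧ v ∈ s(k, l) := by
  simp only [inner_sub_left, inner_sub_right, inner_single_left, PiLp.single_apply, map_one,
    one_mul, Sym2.mem_iff, exists_eq_or_imp, exists_eq_left]
  by_cases hik : i = k <;> by_cases hil : i = l <;> by_cases hjk : j = k <;>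
    by_cases hjl : j = l <;> simp_all [sub_eq_zero, neg_eq_iff_add_eq_zero, one_add_one_eq_two]

lemma exists_sign_smul_single_sub_single {𝕜 : Type*} [RCLike 𝕜] {i j k l : ι}
    (h : s(i, j) = s(k, l)) : ∃ ε : 𝕜, (ε = 1 ∨ ε = -1) ∧
      single k (1 : 𝕜) - single l 1 = ε • (single i 1 - single j 1) := by
  rcases Sym2.eq_iff.mp h with ⟨rfl, rfl⟩ | ⟨rfl, rfl⟩
  · exact ⟨1, .inl rfl, (one_smul _ _).symm⟩
  · exact ⟨-1, .inr rfl, by rw [neg_one_smul, neg_sub]⟩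

end EuclideanSpace

namespace SimpleGraph

lemma meets_iff_inner_ne_zero {𝕜 ι : Type*} [RCLike 𝕜] [Fintype ι] [DecidableEq ι]
    {G : SimpleGraph ι} {vec : G.edgeSet → EuclideanSpace 𝕜 ι}
    (hvec : ∀ e : G.edgeSet, ∃ i j : ι, (e : Sym2 ι) = s(i, j) ∧
      vec e = EuclideanSpace.single i 1 - EuclideanSpace.single j 1) (e f : G.edgeSet) :
    (∃ v, v ∈ (e : Sym2 ι) ∧ v ∈ (f : Sym2 ι)) ↔ ⟪vec e, vec f⟫_𝕜 ≠ 0 := by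
  obtain ⟨i, j, he, hve⟩ := hvec e
  obtain ⟨k, l, hf, hvf⟩ := hvec f
  have hij : i ≠ j := (G.mem_edgeSet.mp (he ▸ e.2)).ne
  have hkl : k ≠ l := (G.mem_edgeSet.mp (hf ▸ f.2)).ne
  rw [he, hf, hve, hvf, EuclideanSpace.inner_single_sub_single_ne_zero_iff hij hkl]

variable {V W : Type*} {G : SimpleGraph V} {G' : SimpleGraph W}

lemma Connected.eq_top_of_card_le_two [Fintype V] (hG : G.Connected) (hV : Fintype.card V ≤ 2) :
    G = ⊤ := by
  ext x y
  refine ⟨Adj.ne, fun hxy => ?_⟩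
  obtain ⟨p⟩ := hG.preconnected x y
  have hx : G.Adj x p.snd := p.adj_snd (p.not_nil_of_ne hxy)
  by_contra hy
  have : p.snd ≠ y := fun h => hy (h ▸ hx)
  exact hV.not_gt (Fintype.two_lt_card_iff.mpr ⟨x, y, p.snd, hxy, hx.ne, this.symm⟩)

lemma Connected.incidenceSet_injective [Fintype V] (hG : G.Connected) (hV : 2 < Fintype.card V) :
    Function.Injective G.incidenceSet := by
  classical
  intro v v' h
  by_contra hne
  have hclosed : ∀ x, x ∈ s(v, v') := by
    intro x
    induction (reachable_iff_reflTransGen _ _).mp (hG.preconnected v x) with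
    | refl => exact Sym2.mem_mk_left _ _
    | @tail b c _ hbc ih =>
      have hb : s(b, c) ∈ G.incidenceSet v ∩ G.incidenceSet v' := by
        rw [← h, Set.inter_self]
        rcases Sym2.mem_iff.mp ih with rfl | rfl
        · exact ⟨hbc, Sym2.mem_mk_left _ _⟩
        · exact h ▸ ⟨hbc, Sym2.mem_mk_left _ _⟩
      rw [← (Sym2.mem_and_mem_iff hne).mp ⟨hb.1.2, hb.2.2⟩]
      exact Sym2.mem_mk_right _ _
  have hsub : (Finset.univ : Finset V) ⊆ {v, v'} := fun x _ => by
    simpa [Sym2.mem_iff] using hclosed x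
  exact hV.not_ge ((Finset.card_le_card hsub).trans Finset.card_le_two)

lemma IsAcyclic.mem_of_meets_of_mem (hG : G.IsAcyclic) {a b c : Sym2 V} (ha : a ∈ G.edgeSet)
    (hb : b ∈ G.edgeSet) (hc : c ∈ G.edgeSet) (hbc : b ≠ c) {p x y : V} (hpb : p ∈ b)
    (hpc : p ∈ c) (hxa : x ∈ a) (hxb : x ∈ b) (hya : y ∈ a) (hyc : y ∈ c) : p ∈ a := by
  classical
  by_contra hpa
  have hxp : x ≠ p := fun h => hpa (h ▸ hxa)
  have hyp : y ≠ p := fun h => hpa (h ▸ hya)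
  obtain rfl : b = s(p, x) := (Sym2.mem_and_mem_iff hxp.symm).mp ⟨hpb, hxb⟩
  obtain rfl : c = s(p, y) := (Sym2.mem_and_mem_iff hyp.symm).mp ⟨hpc, hyc⟩
  have hxy : x ≠ y := by rintro rfl; exact hbc rfl
  obtain rfl : a = s(x, y) := (Sym2.mem_and_mem_iff hxy).mp ⟨hxa, hya⟩
  exact hG.cliqueFree le_rfl {p, x, y} (is3Clique_triple_iff.mpr ⟨hb, hc, ha⟩)

namespace Iso

variable (Φ : G.lineGraph ≃g G'.lineGraph)

lemma lineGraph_meets_iff {e f : G.edgeSet} :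
    (∃ w, w ∈ (Φ e : Sym2 W) ∧ w ∈ (Φ f : Sym2 W)) ↔
      ∃ v, v ∈ (e : Sym2 V) ∧ v ∈ (f : Sym2 V) := by
  rcases eq_or_ne e f with rfl | hef
  · exact ⟨fun _ => ⟨_, Sym2.out_fst_mem _, Sym2.out_fst_mem _⟩,
      fun _ => ⟨_, Sym2.out_fst_mem _, Sym2.out_fst_mem _⟩⟩
  · have := Φ.map_adj_iff (v := e) (w := f)
    simpa [lineGraph_adj_iff_exists, hef, Φ.injective.ne hef] using this

def MapsStar (v : V) (w : W) : Prop :=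
  ∀ e : G.edgeSet, v ∈ (e : Sym2 V) ↔ w ∈ (Φ e : Sym2 W)

variable {Φ}

lemma exists_mapsStar_of_ne (hG : G.IsAcyclic) (hG' : G'.IsAcyclic) {v : V} {f g : G.edgeSet}
    (hfg : f ≠ g) (hvf : v ∈ (f : Sym2 V)) (hvg : v ∈ (g : Sym2 V)) : ∃ w, Φ.MapsStar v w := by
  obtain ⟨w, hwf, hwg⟩ := Φ.lineGraph_meets_iff.mpr ⟨v, hvf, hvg⟩
  have hΦfg : (Φ f : Sym2 W) ≠ Φ g := fun h => hfg (Φ.injective (Subtype.ext h))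
  refine ⟨w, fun e => ⟨fun hve => ?_, fun hwe => ?_⟩⟩
  · obtain ⟨x, hxe, hxf⟩ := Φ.lineGraph_meets_iff.mpr ⟨v, hve, hvf⟩
    obtain ⟨y, hye, hyg⟩ := Φ.lineGraph_meets_iff.mpr ⟨v, hve, hvg⟩
    exact hG'.mem_of_meets_of_mem (Φ e).2 (Φ f).2 (Φ g).2 hΦfg hwf hwg hxe hxf hye hyg
  · obtain ⟨x, hxe, hxf⟩ := Φ.lineGraph_meets_iff.mp ⟨w, hwe, hwf⟩
    obtain ⟨y, hye, hyg⟩ := Φ.lineGraph_meets_iff.mp ⟨w, hwe, hwg⟩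
    exact hG.mem_of_meets_of_mem e.2 f.2 g.2 (Subtype.coe_injective.ne hfg) hvf hvg hxe hxf hye hyg

lemma MapsStar.exists_mapsStar_of_leaf {u v : V} {wu : W} (hu : Φ.MapsStar u wu) {e : G.edgeSet}
    (he : (e : Sym2 V) = s(v, u)) (hv : ∀ f : G.edgeSet, v ∈ (f : Sym2 V) → f = e) :
    ∃ w, Φ.MapsStar v w := by
  obtain ⟨w, hw⟩ := Sym2.mem_iff_exists.mp ((hu e).mp (he ▸ Sym2.mem_mk_right _ _))
  have hwuw : wu ≠ w := (G'.mem_edgeSet.mp (hw ▸ (Φ e).2)).ne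
  refine ⟨w, fun f => ⟨fun hvf => ?_, fun hwf => ?_⟩⟩
  · rw [hv f hvf, hw]
    exact Sym2.mem_mk_right _ _
  · by_contra hvf
    obtain ⟨x, hxf, hxe⟩ := Φ.lineGraph_meets_iff.mp ⟨w, hwf, hw ▸ Sym2.mem_mk_right _ _⟩
    obtain rfl : x = u := by
      rw [he] at hxe
      rcases Sym2.mem_iff.mp hxe with rfl | rfl
      · exact absurd hxf hvf
      · rfl
    have hfe : f ≠ e := fun h => hvf (h ▸ he ▸ Sym2.mem_mk_left _ _)
    have hΦfe : (Φ f : Sym2 W) = Φ e := by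
      rw [hw, ← Sym2.mem_and_mem_iff hwuw]
      exact ⟨(hu f).mp hxf, hwf⟩
    exact hfe (Φ.injective (Subtype.ext hΦfe))

lemma MapsStar.eq_of_mapsStar [Fintype V] (hG : G.Connected) (hV : 2 < Fintype.card V)
    {v v' : V} {w : W} (h : Φ.MapsStar v w) (h' : Φ.MapsStar v' w) : v = v' :=
  hG.incidenceSet_injective hV <| Set.ext fun z =>
    ⟨fun ⟨hz, hvz⟩ => ⟨hz, (h' ⟨z, hz⟩).mpr ((h ⟨z, hz⟩).mp hvz)⟩,
      fun ⟨hz, hvz⟩ => ⟨hz, (h ⟨z, hz⟩).mpr ((h' ⟨z, hz⟩).mp hvz)⟩⟩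

lemma exists_mapsStar [Fintype V] (hG : G.IsTree) (hG' : G'.IsAcyclic) (hV : 2 < Fintype.card V)
    (v : V) : ∃ w, Φ.MapsStar v w := by
  have : Nontrivial V := Fintype.one_lt_card_iff_nontrivial.mp (by omega)
  obtain ⟨u, hvu⟩ := hG.connected.preconnected.exists_adj_of_nontrivial v
  let e : G.edgeSet := ⟨s(v, u), hvu⟩
  by_cases hv : ∃ f : G.edgeSet, v ∈ (f : Sym2 V) ∧ f ≠ e
  · obtain ⟨f, hvf, hfe⟩ := hv
    exact exists_mapsStar_of_ne hG.isAcyclic hG' hfe hvf (Sym2.mem_mk_left _ _)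
  push Not at hv
  obtain ⟨g, hug, hge⟩ : ∃ g : G.edgeSet, u ∈ (g : Sym2 V) ∧ g ≠ e := by
    by_contra! hu
    refine hvu.ne (hG.connected.incidenceSet_injective hV (Set.ext fun z => ?_))
    refine ⟨fun ⟨hz, hvz⟩ => ⟨hz, ?_⟩, fun ⟨hz, huz⟩ => ⟨hz, ?_⟩⟩
    · rw [show z = s(v, u) from congrArg Subtype.val (hv ⟨z, hz⟩ hvz)]
      exact Sym2.mem_mk_right _ _
    · rw [show z = s(v, u) from congrArg Subtype.val (hu ⟨z, hz⟩ huz)]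
      exact Sym2.mem_mk_left _ _
  obtain ⟨wu, hwu⟩ := exists_mapsStar_of_ne hG.isAcyclic hG' hge hug (Sym2.mem_mk_right _ _)
  exact hwu.exists_mapsStar_of_leaf rfl hv

lemma exists_injective_lineGraph_eq_map [Fintype V] (hG : G.IsTree) (hG' : G'.IsAcyclic)
    (hV : 2 < Fintype.card V) (Φ : G.lineGraph ≃g G'.lineGraph) :
    ∃ Ψ : V → W, Function.Injective Ψ ∧ ∀ e : G.edgeSet, (Φ e : Sym2 W) = Sym2.map Ψ e := by
  choose Ψ hΨ using Φ.exists_mapsStar hG hG' hV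
  have hinj : Function.Injective Ψ := fun v v' h =>
    (hΨ v).eq_of_mapsStar hG.connected hV (h ▸ hΨ v')
  refine ⟨Ψ, hinj, ?_⟩
  rintro ⟨e, he⟩
  induction e using Sym2.ind with
  | h a b =>
    rw [Sym2.map_mk, ← Sym2.mem_and_mem_iff (hinj.ne (G.mem_edgeSet.mp he).ne)]
    exact ⟨(hΨ a _).mp (Sym2.mem_mk_left _ _), (hΨ b _).mp (Sym2.mem_mk_right _ _)⟩

end Iso

theorem IsTree.nonempty_iso_of_lineGraph_iso [Fintype V] (hG : G.IsTree) (hG' : G'.IsTree)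
    (hV : 2 < Fintype.card V) (Φ : G.lineGraph ≃g G'.lineGraph) : Nonempty (G ≃g G') := by
  obtain ⟨Ψ, hinj, hmap⟩ := Φ.exists_injective_lineGraph_eq_map hG hG'.isAcyclic hV
  have hsurj : Function.Surjective Ψ := by
    intro w
    have : Nontrivial V := Fintype.one_lt_card_iff_nontrivial.mp (by omega)
    obtain ⟨a⟩ : Nonempty V := inferInstance
    obtain ⟨b, hab⟩ := hG.connected.preconnected.exists_adj_of_nontrivial a
    have : Nontrivial W := ⟨⟨Ψ a, Ψ b, hinj.ne hab.ne⟩⟩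
    obtain ⟨w', hww'⟩ := hG'.connected.preconnected.exists_adj_of_nontrivial w
    have h : s(w, w') = Sym2.map Ψ (Φ.symm ⟨s(w, w'), hww'⟩) := by
      rw [← hmap, Φ.apply_symm_apply]
    obtain ⟨c, -, hc⟩ := Sym2.mem_map.mp (h ▸ Sym2.mem_mk_left w w')
    exact ⟨c, hc⟩
  have hadj : ∀ a b, G'.Adj (Ψ a) (Ψ b) ↔ G.Adj a b := by
    refine fun a b => ⟨fun h => ?_, fun h => by simpa [hmap] using (Φ ⟨s(a, b), h⟩).2⟩
    have h' : Sym2.map Ψ s(a, b) = Sym2.map Ψ (Φ.symm ⟨s(Ψ a, Ψ b), h⟩) := by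
      rw [← hmap, Φ.apply_symm_apply, Sym2.map_mk]
    exact G.mem_edgeSet.mp (Sym2.map.injective hinj h' ▸ (Φ.symm _).2)
  exact ⟨⟨Equiv.ofBijective Ψ ⟨hinj, hsurj⟩, hadj _ _⟩⟩

end SimpleGraph

/-- The families of simplices generating `Aₙ` are in one-to-one correspondence with
the trees with `n+1` vertices: two trees on `Fin (n+1)` are isomorphic if and only if
their associated root families (one vector `eᵢ - eⱼ` per edge) agree up to a linear
isometry, a bijection of the index sets, and signs. -/
theorem An_families_iff_trees {n : ℕ}
    (T₁ T₂ : SimpleGraph (Fin (n + 1)))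
    (h₁ : T₁.IsTree) (h₂ : T₂.IsTree)
    (vec₁ : T₁.edgeSet → EuclideanSpace ℝ (Fin (n + 1)))
    (vec₂ : T₂.edgeSet → EuclideanSpace ℝ (Fin (n + 1)))
    (hvec₁ : ∀ e : T₁.edgeSet, ∃ i j : Fin (n + 1),
      (e : Sym2 (Fin (n + 1))) = s(i, j) ∧
      vec₁ e = EuclideanSpace.single i 1 - EuclideanSpace.single j 1)
    (hvec₂ : ∀ e : T₂.edgeSet, ∃ i j : Fin (n + 1),
      (e : Sym2 (Fin (n + 1))) = s(i, j) ∧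
      vec₂ e = EuclideanSpace.single i 1 - EuclideanSpace.single j 1) :
    Nonempty (T₁ ≃g T₂) ↔
      ∃ (T : EuclideanSpace ℝ (Fin (n + 1)) ≃ₗᵢ[ℝ] EuclideanSpace ℝ (Fin (n + 1)))
        (φ : T₁.edgeSet ≃ T₂.edgeSet) (ε : T₁.edgeSet → ℝ),
        (∀ e, ε e = 1 ∨ ε e = -1) ∧
        ∀ e, vec₂ (φ e) = ε e • T (vec₁ e) := by
  constructor
  · rintro ⟨g⟩
    let T := LinearIsometryEquiv.piLpCongrLeft 2 ℝ ℝ g.toEquiv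
    have hsign : ∀ e, ∃ ε : ℝ, (ε = 1 ∨ ε = -1) ∧ vec₂ (g.mapEdgeSet e) = ε • T (vec₁ e) := by
      intro e
      obtain ⟨i, j, he, hve⟩ := hvec₁ e
      obtain ⟨k, l, hge, hvge⟩ := hvec₂ (g.mapEdgeSet e)
      have hij : s(g i, g j) = s(k, l) := by
        rw [← hge, ← Sym2.map_mk, ← he]
        rfl
      simp only [hvge, hve, T, map_sub, EuclideanSpace.piLpCongrLeft_single]
      exact EuclideanSpace.exists_sign_smul_single_sub_single hij
    choose ε hε hvec using hsign
    exact ⟨T, g.mapEdgeSet, ε, hε, hvec⟩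
  · rintro ⟨T, φ, ε, hε, hvec⟩
    rcases le_or_gt (Fintype.card (Fin (n + 1))) 2 with hn | hn
    · rw [h₁.connected.eq_top_of_card_le_two hn, h₂.connected.eq_top_of_card_le_two hn]
      exact ⟨Iso.refl⟩
    have hε0 : ∀ e, ε e ≠ 0 := fun e => by rcases hε e with h | h <;> simp [h]
    refine h₁.nonempty_iso_of_lineGraph_iso h₂ hn ⟨φ, fun {e f} => ?_⟩
    simp only [lineGraph_adj_iff_exists, φ.injective.ne_iff, meets_iff_inner_ne_zero hvec₁,
      meets_iff_inner_ne_zero hvec₂, hvec, real_inner_smul_left, real_inner_smul_right,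
      LinearIsometryEquiv.inner_map_map, ne_eq, mul_eq_zero, hε0, false_or]
end

section
/- Let f_1, …, f_n be linearly independent vectors in EuclideanSpace ℝ (Fin n), each belonging to the set {±e_i : i} ∪ {±e_i ± e_j : i ≠ j} (where e_1, …, e_n is the standard orthonormal basis), and suppose the family f_1, …, f_n is indecomposable. Then the subgroup of linear isometries of EuclideanSpace ℝ (Fin n) generated by the reflections in f_1, …, f_n equals the subgroup generated by all reflections in the vectors e_i (1 ≤ i ≤ n) and e_i ± e_j (i < j) — namely the full group of signed coordinate permutations, the Weyl group of B_n — if and only if f_k = e_i or f_k = −e_i for some k and some i. -/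
open scoped RealInnerProductSpace

/-- The graph whose vertices are the members of the family `f`, two of them being
adjacent iff they are not orthogonal; the family is indecomposable iff this graph
is connected. -/
def gramGraph {E : Type*} [NormedAddCommGroup E] [InnerProductSpace ℝ E]
    {ι : Type*} (f : ι → E) : SimpleGraph ι where
  Adj i j := i ≠ j ∧ ⟪f i, f j⟫ ≠ 0
  symm := by
    constructor
    intro i j h
    exact ⟨h.1.symm, by rw [real_inner_comm]; exact h.2⟩
  loopless := ⟨fun i h => h.1 rfl⟩

/-- The reflection in the hyperplane orthogonal to a vector `v`. -/
noncomputable def reflIn {m : ℕ} (v : EuclideanSpace ℝ (Fin m)) :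
    EuclideanSpace ℝ (Fin m) ≃ₗᵢ[ℝ] EuclideanSpace ℝ (Fin m) :=
  Submodule.reflection (ℝ ∙ v)ᗮ

/-- `v` is a root of the root system `Bₙ`: `v = ±eᵢ` or `v = ±eᵢ ± eⱼ` with `i ≠ j`. -/
def IsBRoot {m : ℕ} (v : EuclideanSpace ℝ (Fin m)) : Prop :=
  (∃ i, v = EuclideanSpace.single i 1 ∨ v = -EuclideanSpace.single i 1) ∨
  (∃ i j, i ≠ j ∧
    (v = EuclideanSpace.single i 1 + EuclideanSpace.single j 1 ∨
     v = EuclideanSpace.single i 1 - EuclideanSpace.single j 1 ∨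
     v = -(EuclideanSpace.single i 1 + EuclideanSpace.single j 1)))


/-! Without a short root every generator is a reflection in some `eₐ ± e_b`; these act as
signed transpositions with two sign changes and so preserve the product of the coordinates,
which the reflection in `eᵢ` negates. Conversely, call coordinates `a`, `b` linked in `G` when
`G` contains the reflection in `eₐ + η e_b` for a sign `η`. Conjugating one such reflection by
another shows that linking is transitive, and conjugating the reflection in `eₐ` by it gives
the reflection in `e_b`. Non-orthogonal roots share a coordinate, so indecomposability links
all coordinates in the supports of the `f k`, which by linear independence are all coordinates.
Once every reflection in `eᵢ` is present, conjugating by it switches the sign `η`. -/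

local notation "𝐞" i:max => EuclideanSpace.single i (1 : ℝ)

section Reflection

variable {m : ℕ}

lemma reflIn_apply (v x : EuclideanSpace ℝ (Fin m)) :
    reflIn v x = x - (2 * ⟪v, x⟫ / ⟪v, v⟫) • v := by
  rw [reflIn, Submodule.reflection_orthogonal_apply, Submodule.reflection_singleton_apply,
    real_inner_self_eq_norm_sq]
  simp only [RCLike.ofReal_real_eq_id, id_eq]
  match_scalars <;> ring

lemma reflIn_smul {c : ℝ} (hc : c ≠ 0) (v : EuclideanSpace ℝ (Fin m)) :
    reflIn (c • v) = reflIn v := by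
  simp only [reflIn, Submodule.span_singleton_smul_eq (IsUnit.mk0 c hc)]

lemma reflIn_neg (v : EuclideanSpace ℝ (Fin m)) : reflIn (-v) = reflIn v := by
  rw [← neg_one_smul ℝ v, reflIn_smul (by norm_num)]

lemma reflIn_map (g : EuclideanSpace ℝ (Fin m) ≃ₗᵢ[ℝ] EuclideanSpace ℝ (Fin m))
    (v : EuclideanSpace ℝ (Fin m)) : reflIn (g v) = g * reflIn v * g⁻¹ := by
  ext x : 1
  have hx : ⟪g v, x⟫ = ⟪v, g.symm x⟫ := by
    rw [← g.inner_map_map v (g.symm x), g.apply_symm_apply]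
  change reflIn (g v) x = g (reflIn v (g.symm x))
  rw [reflIn_apply, reflIn_apply, map_sub, map_smul, hx, g.inner_map_map, g.apply_symm_apply]

lemma reflIn_reflIn_mem {G : Subgroup (EuclideanSpace ℝ (Fin m) ≃ₗᵢ[ℝ] EuclideanSpace ℝ (Fin m))}
    {v w : EuclideanSpace ℝ (Fin m)} (hv : reflIn v ∈ G) (hw : reflIn w ∈ G) :
    reflIn (reflIn v w) ∈ G := by
  rw [reflIn_map]
  exact mul_mem (mul_mem hv hw) (inv_mem hv)

end Reflection

section Coordinates

variable {m : ℕ}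

lemma reflIn_single_apply (i : Fin m) (x : EuclideanSpace ℝ (Fin m)) :
    reflIn (𝐞 i) x = x - (2 * x i) • 𝐞 i := by
  simp [reflIn_apply, EuclideanSpace.inner_single_left]

lemma reflIn_single_add_smul_single_apply {η : ℝ} (hη : η * η = 1) {a b : Fin m} (hab : a ≠ b)
    (x : EuclideanSpace ℝ (Fin m)) :
    reflIn (𝐞 a + η • 𝐞 b) x = x - (x a + η * x b) • (𝐞 a + η • 𝐞 b) := by
  have hnorm : ⟪𝐞 a + η • 𝐞 b, 𝐞 a + η • 𝐞 b⟫ = 2 := by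
    simp only [inner_add_left, inner_add_right, real_inner_smul_left, real_inner_smul_right,
      EuclideanSpace.inner_single_left, PiLp.single_apply]
    norm_num [hab, hab.symm, hη]
  have hx : ⟪𝐞 a + η • 𝐞 b, x⟫ = x a + η * x b := by
    simp [inner_add_left, real_inner_smul_left, EuclideanSpace.inner_single_left]
  rw [reflIn_apply, hnorm, hx]
  congr 2
  ring

lemma reflIn_single_add_smul_single_comm {η : ℝ} (hη : η * η = 1) (a b : Fin m) :
    reflIn (𝐞 a + η • 𝐞 b) = reflIn (𝐞 b + η • 𝐞 a) := by
  have hη0 : η ≠ 0 := by rintro rfl; norm_num at hη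
  rw [← reflIn_smul hη0 (𝐞 a + η • 𝐞 b), smul_add, smul_smul, hη, one_smul, add_comm]

end Coordinates

section CoordProd

variable {m : ℕ}

lemma reflIn_single_apply_coord (i : Fin m) (x : EuclideanSpace ℝ (Fin m)) (j : Fin m) :
    reflIn (𝐞 i) x j = (if j = i then -1 else 1) * x j := by
  rw [reflIn_single_apply]
  split_ifs with hj
  · simp [hj, two_mul]
  · simp [hj]

lemma reflIn_single_add_smul_single_apply_coord {η : ℝ} (hη : η * η = 1) {a b : Fin m}
    (hab : a ≠ b) (x : EuclideanSpace ℝ (Fin m)) (j : Fin m) :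
    reflIn (𝐞 a + η • 𝐞 b) x j =
      (if j = a then -η else 1) * (if j = b then -η else 1) * x (Equiv.swap a b j) := by
  rw [reflIn_single_add_smul_single_apply hη hab]
  rcases eq_or_ne a j with rfl | hja
  · simp [hab]
  rcases eq_or_ne b j with rfl | hjb
  · simp only [PiLp.sub_apply, PiLp.smul_apply, PiLp.add_apply, smul_eq_mul, hja.symm,
      PiLp.single_eq_same, PiLp.single_eq_of_ne, Ne, not_false_eq_true, if_true, if_false,
      Equiv.swap_apply_right]
    linear_combination (-x b) * hη
  · simp [hja.symm, hjb.symm, Equiv.swap_apply_of_ne_of_ne]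

def coordProdStabilizer (m : ℕ) :
    Subgroup (EuclideanSpace ℝ (Fin m) ≃ₗᵢ[ℝ] EuclideanSpace ℝ (Fin m)) where
  carrier := {g | ∀ x, ∏ i, g x i = ∏ i, x i}
  one_mem' _ := rfl
  mul_mem' hg hh x := (hg _).trans (hh x)
  inv_mem' {g} hg x := by
    rw [← hg (g⁻¹ x), show g (g⁻¹ x) = x from g.apply_symm_apply x]

lemma reflIn_single_notMem_coordProdStabilizer (i : Fin m) :
    reflIn (𝐞 i) ∉ coordProdStabilizer m := by
  intro h
  have hone := h (WithLp.toLp 2 fun _ => 1)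
  simp only [reflIn_single_apply_coord, Finset.prod_mul_distrib, Finset.prod_ite_eq'] at hone
  norm_num at hone

lemma reflIn_single_add_smul_single_mem_coordProdStabilizer {η : ℝ} (hη : η * η = 1)
    {a b : Fin m} (hab : a ≠ b) : reflIn (𝐞 a + η • 𝐞 b) ∈ coordProdStabilizer m := by
  intro x
  simp only [reflIn_single_add_smul_single_apply_coord hη hab, Finset.prod_mul_distrib,
    Finset.prod_ite_eq', Finset.mem_univ, if_true, Equiv.prod_comp (Equiv.swap a b) (fun j => x j)]
  linear_combination (∏ j, x j) * hη

end CoordProd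

section Roots

variable {m : ℕ}

lemma IsBRoot.exists_eq_smul {v : EuclideanSpace ℝ (Fin m)} (hv : IsBRoot v) :
    ∃ s : ℝ, s * s = 1 ∧ ((∃ i, v = s • 𝐞 i) ∨
      ∃ a b, ∃ η : ℝ, a ≠ b ∧ η * η = 1 ∧ v = s • (𝐞 a + η • 𝐞 b)) := by
  rcases hv with ⟨i, rfl | rfl⟩ | ⟨a, b, hab, rfl | rfl | rfl⟩
  · exact ⟨1, by norm_num, .inl ⟨i, by module⟩⟩
  · exact ⟨-1, by norm_num, .inl ⟨i, by module⟩⟩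
  · exact ⟨1, by norm_num, .inr ⟨a, b, 1, hab, by norm_num, by module⟩⟩
  · exact ⟨1, by norm_num, .inr ⟨a, b, -1, hab, by norm_num, by module⟩⟩
  · exact ⟨-1, by norm_num, .inr ⟨a, b, 1, hab, by norm_num, by module⟩⟩

lemma IsBRoot.reflIn_mem_coordProdStabilizer {v : EuclideanSpace ℝ (Fin m)} (hv : IsBRoot v)
    (hlong : ∀ i, v ≠ 𝐞 i ∧ v ≠ -𝐞 i) : reflIn v ∈ coordProdStabilizer m := by
  obtain ⟨s, hs, ⟨i, rfl⟩ | ⟨a, b, η, hab, hη, rfl⟩⟩ := hv.exists_eq_smul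
  · rcases mul_self_eq_one_iff.mp hs with rfl | rfl
    · exact absurd (one_smul ℝ (𝐞 i)) (hlong i).1
    · exact absurd (neg_one_smul ℝ (𝐞 i)) (hlong i).2
  · rw [reflIn_smul (left_ne_zero_of_mul_eq_one hs)]
    exact reflIn_single_add_smul_single_mem_coordProdStabilizer hη hab

def bReflections (m : ℕ) : Set (EuclideanSpace ℝ (Fin m) ≃ₗᵢ[ℝ] EuclideanSpace ℝ (Fin m)) :=
  {r | (∃ i, r = reflIn (EuclideanSpace.single i (1 : ℝ))) ∨
    (∃ i j, i ≠ j ∧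
      (r = reflIn (EuclideanSpace.single i (1 : ℝ) + EuclideanSpace.single j 1) ∨
       r = reflIn (EuclideanSpace.single i (1 : ℝ) - EuclideanSpace.single j 1)))}

lemma IsBRoot.reflIn_mem_bReflections {v : EuclideanSpace ℝ (Fin m)} (hv : IsBRoot v) :
    reflIn v ∈ bReflections m := by
  rcases hv with ⟨i, rfl | rfl⟩ | ⟨a, b, hab, rfl | rfl | rfl⟩
  · exact .inl ⟨i, rfl⟩
  · exact .inl ⟨i, reflIn_neg _⟩
  · exact .inr ⟨a, b, hab, .inl rfl⟩
  · exact .inr ⟨a, b, hab, .inr rfl⟩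
  · exact .inr ⟨a, b, hab, .inl (reflIn_neg _)⟩

end Roots

section Linked

variable {m : ℕ} {G : Subgroup (EuclideanSpace ℝ (Fin m) ≃ₗᵢ[ℝ] EuclideanSpace ℝ (Fin m))}
  {a b c : Fin m}

def CoordLinked (G : Subgroup (EuclideanSpace ℝ (Fin m) ≃ₗᵢ[ℝ] EuclideanSpace ℝ (Fin m)))
    (a b : Fin m) : Prop :=
  a = b ∨ ∃ η : ℝ, η * η = 1 ∧ reflIn (𝐞 a + η • 𝐞 b) ∈ G

lemma CoordLinked.symm (h : CoordLinked G a b) : CoordLinked G b a := by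
  rcases h with rfl | ⟨η, hη, h⟩
  · exact .inl rfl
  · exact .inr ⟨η, hη, reflIn_single_add_smul_single_comm hη a b ▸ h⟩

lemma CoordLinked.trans (h₁ : CoordLinked G a b) (h₂ : CoordLinked G b c) :
    CoordLinked G a c := by
  rcases eq_or_ne a b with rfl | hab
  · exact h₂
  rcases eq_or_ne b c with rfl | hbc
  · exact h₁
  rcases eq_or_ne a c with rfl | hac
  · exact .inl rfl
  obtain ⟨η, hη, h₁⟩ := h₁.resolve_left hab
  obtain ⟨θ, hθ, h₂⟩ := h₂.resolve_left hbc
  have hcoeff : (𝐞 a + η • 𝐞 b) b + θ * (𝐞 a + η • 𝐞 b) c = η := by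
    simp [hab.symm, hbc.symm, hac.symm]
  have hrefl : reflIn (𝐞 b + θ • 𝐞 c) (𝐞 a + η • 𝐞 b) = 𝐞 a + -(η * θ) • 𝐞 c := by
    rw [reflIn_single_add_smul_single_apply hθ hbc, hcoeff]
    module
  refine .inr ⟨-(η * θ), by linear_combination θ * θ * hη + hθ, ?_⟩
  exact hrefl ▸ reflIn_reflIn_mem h₂ h₁

lemma CoordLinked.reflIn_single_mem (h : CoordLinked G a b) (ha : reflIn (𝐞 a) ∈ G) :
    reflIn (𝐞 b) ∈ G := by
  rcases eq_or_ne a b with rfl | hab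
  · exact ha
  obtain ⟨η, hη, h⟩ := h.resolve_left hab
  have hrefl : reflIn (𝐞 a + η • 𝐞 b) (𝐞 a) = -η • 𝐞 b := by
    rw [reflIn_single_add_smul_single_apply hη hab]
    simp [hab.symm]
  have hη0 : -η ≠ 0 := neg_ne_zero.mpr (left_ne_zero_of_mul_eq_one hη)
  simpa only [hrefl, reflIn_smul hη0] using reflIn_reflIn_mem h ha

lemma CoordLinked.reflIn_single_add_smul_single_mem (h : CoordLinked G a b) (hab : a ≠ b)
    (hb : reflIn (𝐞 b) ∈ G) {η : ℝ} (hη : η * η = 1) : reflIn (𝐞 a + η • 𝐞 b) ∈ G := by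
  obtain ⟨θ, hθ, h⟩ := h.resolve_left hab
  rcases mul_self_eq_mul_self_iff.mp (hη.trans hθ.symm) with rfl | rfl
  · exact h
  have hcoeff : (𝐞 a + θ • 𝐞 b) b = θ := by simp [hab]
  have hrefl : reflIn (𝐞 b) (𝐞 a + θ • 𝐞 b) = 𝐞 a + -θ • 𝐞 b := by
    rw [reflIn_single_apply, hcoeff]
    module
  exact hrefl ▸ reflIn_reflIn_mem hb h

lemma IsBRoot.coordLinked {v : EuclideanSpace ℝ (Fin m)} (hv : IsBRoot v) (hG : reflIn v ∈ G)
    (ha : v a ≠ 0) (hb : v b ≠ 0) : CoordLinked G a b := by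
  obtain ⟨s, hs, ⟨i, rfl⟩ | ⟨i, j, η, hij, hη, rfl⟩⟩ := hv.exists_eq_smul
  · obtain ⟨rfl, -⟩ : a = i ∧ s ≠ 0 := by simpa using ha
    obtain ⟨rfl, -⟩ : b = a ∧ s ≠ 0 := by simpa using hb
    exact .inl rfl
  rw [reflIn_smul (left_ne_zero_of_mul_eq_one hs)] at hG
  have hsupp : ∀ c, (s • (𝐞 i + η • 𝐞 j)) c ≠ 0 → c = i ∨ c = j := by
    intro c hc
    by_contra! h
    simp [h.1, h.2] at hc
  have hij' : CoordLinked G i j := .inr ⟨η, hη, hG⟩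
  rcases hsupp a ha with rfl | rfl <;> rcases hsupp b hb with rfl | rfl
  exacts [.inl rfl, hij', hij'.symm, .inl rfl]

end Linked

section Indecomposable

variable {ι ι' : Type*}

lemma exists_apply_ne_zero_of_inner_ne_zero [Fintype ι'] {x y : EuclideanSpace ℝ ι'}
    (h : ⟪x, y⟫ ≠ 0) : ∃ i, x i ≠ 0 ∧ y i ≠ 0 := by
  rw [PiLp.inner_apply] at h
  obtain ⟨i, -, hi⟩ := Finset.exists_ne_zero_of_sum_ne_zero h
  rw [RCLike.inner_apply', conj_trivial] at hi
  exact ⟨i, left_ne_zero_of_mul hi, right_ne_zero_of_mul hi⟩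

lemma exists_apply_ne_zero_of_span_eq_top [Fintype ι'] [DecidableEq ι']
    {f : ι → EuclideanSpace ℝ ι'} (hf : Submodule.span ℝ (Set.range f) = ⊤) (i : ι') :
    ∃ k, f k i ≠ 0 := by
  by_contra! h
  have hproj : (EuclideanSpace.proj i : EuclideanSpace ℝ ι' →L[ℝ] ℝ).toLinearMap = 0 :=
    LinearMap.ext_on_range hf (by simpa using h)
  simpa using LinearMap.congr_fun hproj (EuclideanSpace.single i 1)

lemma coordLinked_of_preconnected {m : ℕ}
    {G : Subgroup (EuclideanSpace ℝ (Fin m) ≃ₗᵢ[ℝ] EuclideanSpace ℝ (Fin m))}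
    {f : ι → EuclideanSpace ℝ (Fin m)} (hroot : ∀ k, IsBRoot (f k)) (hG : ∀ k, reflIn (f k) ∈ G)
    (hconn : (gramGraph f).Preconnected) {k l : ι} {a b : Fin m} (ha : f k a ≠ 0)
    (hb : f l b ≠ 0) : CoordLinked G a b := by
  obtain ⟨w⟩ := hconn k l
  induction w generalizing a with
  | nil => exact (hroot _).coordLinked (hG _) ha hb
  | cons hadj _ ih =>
    obtain ⟨c, hc₁, hc₂⟩ := exists_apply_ne_zero_of_inner_ne_zero hadj.2
    exact ((hroot _).coordLinked (hG _) ha hc₁).trans (ih hc₂ hb)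

end Indecomposable

/-- An indecomposable linearly independent system of `n` roots of `Bₙ` generates the
full Weyl group of `Bₙ` (the group generated by all reflections in the roots `eᵢ` and
`eᵢ ± eⱼ`, i.e. the group of signed coordinate permutations) if and only if the system
contains a root `±eᵢ`. -/
theorem Bn_generation_iff_short_root {n : ℕ}
    (f : Fin n → EuclideanSpace ℝ (Fin n))
    (hli : LinearIndependent ℝ f)
    (hroot : ∀ k, IsBRoot (f k))
    (hindec : (gramGraph f).Connected) :
    Subgroup.closure (Set.range fun k => reflIn (f k)) =
      Subgroup.closure {r | (∃ i, r = reflIn (EuclideanSpace.single i (1 : ℝ))) ∨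
        (∃ i j, i ≠ j ∧
          (r = reflIn (EuclideanSpace.single i (1 : ℝ) + EuclideanSpace.single j 1) ∨
           r = reflIn (EuclideanSpace.single i (1 : ℝ) - EuclideanSpace.single j 1)))}
    ↔ ∃ k i, f k = EuclideanSpace.single i 1 ∨ f k = -EuclideanSpace.single i 1 := by
  change _ = Subgroup.closure (bReflections n) ↔ _
  set G := Subgroup.closure (Set.range fun k => reflIn (f k))
  have hgen (k : Fin n) : reflIn (f k) ∈ G := Subgroup.subset_closure ⟨k, rfl⟩
  constructor
  · intro hG
    by_contra! hlong
    obtain ⟨i⟩ := hindec.nonempty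
    have hle : G ≤ coordProdStabilizer n := (Subgroup.closure_le _).mpr <| by
      rintro _ ⟨k, rfl⟩
      exact (hroot k).reflIn_mem_coordProdStabilizer (hlong k)
    exact reflIn_single_notMem_coordProdStabilizer i
      (hle (hG ▸ Subgroup.subset_closure (.inl ⟨i, rfl⟩)))
  · rintro ⟨k₀, i₀, hk₀⟩
    have hspan := hli.span_eq_top_of_card_eq_finrank' (by simp)
    have hlinked (a b : Fin n) : CoordLinked G a b := by
      obtain ⟨k, hk⟩ := exists_apply_ne_zero_of_span_eq_top hspan a
      obtain ⟨l, hl⟩ := exists_apply_ne_zero_of_span_eq_top hspan b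
      exact coordLinked_of_preconnected hroot hgen hindec.preconnected hk hl
    have hshort₀ : reflIn (𝐞 i₀) ∈ G := by
      rcases hk₀ with h | h <;> simpa [h, reflIn_neg] using hgen k₀
    have hshort (b : Fin n) : reflIn (𝐞 b) ∈ G := (hlinked i₀ b).reflIn_single_mem hshort₀
    refine le_antisymm ((Subgroup.closure_le _).mpr ?_) ((Subgroup.closure_le _).mpr ?_)
    · rintro _ ⟨k, rfl⟩
      exact Subgroup.subset_closure (hroot k).reflIn_mem_bReflections
    · rintro _ (⟨i, rfl⟩ | ⟨i, j, hij, rfl | rfl⟩)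
      · exact hshort i
      · simpa using
          (hlinked i j).reflIn_single_add_smul_single_mem hij (hshort j) (η := 1) (by norm_num)
      · simpa [sub_eq_add_neg] using
          (hlinked i j).reflIn_single_add_smul_single_mem hij (hshort j) (η := -1) (by norm_num)
end
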